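/- arXiv:2408.16407 — 4 statements merged into one kernel-verified Lean document; each statement's English description precedes it below -/
import Mathlib

section
/- Fix δ ≠ 0, β ∈ ℝ, r > 0, and x = (x₁,x₂,x₃,x₄) ∈ ℝ⁴. Let r·x = (rx₁, rx₂, r²x₃, r³x₄) and let W_r be the dilation operator (W_rφ)(ξ) = r^{-1/2} φ(ξ/r). Then W_r⁻¹ ∘ π^{δ,β}(r·x) ∘ W_r = π^{r³δ, rβ}(x), as an identity of operators applied to any function φ : ℝ → ℂ pointwise. -/
open Complex

/-- The generic representation π^{δ,β} of the Engel group acting on functions. -/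
noncomputable def engelRep (δ β : ℝ) (x : ℝ × ℝ × ℝ × ℝ) (φ : ℝ → ℂ) : ℝ → ℂ :=
  fun ξ =>
    Complex.exp (I * (δ : ℂ) *
        ((x.2.2.2 : ℂ) + (ξ : ℂ) * (x.2.2.1 : ℂ) + (1 / 2) * (x.1 : ℂ) * (x.2.2.1 : ℂ))) *
      Complex.exp (I * ((β : ℂ) + (δ : ℂ) / 2 * ((ξ : ℂ) + (x.1 : ℂ)) ^ 2) * (x.2.1 : ℂ)) *
      φ (ξ + x.1)

/-- The anisotropic dilations on the Engel group. -/
noncomputable def engelDil (r : ℝ) (x : ℝ × ℝ × ℝ × ℝ) : ℝ × ℝ × ℝ × ℝ :=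
  (r * x.1, r * x.2.1, r ^ 2 * x.2.2.1, r ^ 3 * x.2.2.2)

/-- The unitary dilation W_r on functions: (W_rφ)(ξ) = r^{-1/2} φ(ξ/r). -/
noncomputable def Wdil (r : ℝ) (φ : ℝ → ℂ) : ℝ → ℂ :=
  fun ξ => ((r ^ (-(1 : ℝ) / 2) : ℝ) : ℂ) * φ (ξ / r)

/-!
Conjugation by W_r replaces ξ by rξ. With x replaced by r·x as well, every monomial of the phase
of π^{δ,β} is weighted homogeneous for the weights (1, 1, 1, 2, 3) of (ξ, x₁, x₂, x₃, x₄): the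
δ-terms have weight three and βx₂ weight one, so the factors r³ and r are absorbed into δ and β.
The normalising factors r^{1/2} of W_r⁻¹ and r^{-1/2} of W_r cancel.
-/

lemma engelRep_engelDil_apply_mul (δ β r : ℝ) (x : ℝ × ℝ × ℝ × ℝ) (ψ : ℝ → ℂ) (ξ : ℝ) :
    engelRep δ β (engelDil r x) ψ (r * ξ) =
      engelRep (r ^ 3 * δ) (r * β) x (fun η => ψ (r * η)) ξ := by
  simp only [engelRep, engelDil, mul_add]
  congr 3 <;> push_cast <;> ring

lemma engelRep_const_mul (δ β : ℝ) (x : ℝ × ℝ × ℝ × ℝ) (c : ℂ) (φ : ℝ → ℂ) (ξ : ℝ) :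
    engelRep δ β x (fun η => c * φ η) ξ = c * engelRep δ β x φ ξ := by
  simp only [engelRep]
  ring

lemma Wdil_apply_mul {r : ℝ} (hr : r ≠ 0) (φ : ℝ → ℂ) (η : ℝ) :
    Wdil r φ (r * η) = ((r ^ (-(1 : ℝ) / 2) : ℝ) : ℂ) * φ η := by
  rw [Wdil, mul_div_cancel_left₀ η hr]

lemma Wdil_inv_apply {r : ℝ} (hr : 0 < r) (ψ : ℝ → ℂ) (ξ : ℝ) :
    Wdil r⁻¹ ψ ξ = ((r ^ ((1 : ℝ) / 2) : ℝ) : ℂ) * ψ (r * ξ) := by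
  rw [Wdil, Real.inv_rpow hr.le, ← Real.rpow_neg hr.le, div_inv_eq_mul, mul_comm ξ]
  norm_num

lemma rpow_half_mul_rpow_neg_half {r : ℝ} (hr : 0 < r) :
    r ^ ((1 : ℝ) / 2) * r ^ (-(1 : ℝ) / 2) = 1 := by
  rw [← Real.rpow_add hr]
  norm_num

theorem stmt9_general (δ β r : ℝ) (hr : 0 < r) (x : ℝ × ℝ × ℝ × ℝ)
    (φ : ℝ → ℂ) (ξ : ℝ) :
    Wdil r⁻¹ (engelRep δ β (engelDil r x) (Wdil r φ)) ξ =
      engelRep (r ^ 3 * δ) (r * β) x φ ξ := by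
  calc Wdil r⁻¹ (engelRep δ β (engelDil r x) (Wdil r φ)) ξ
      = ((r ^ ((1 : ℝ) / 2) : ℝ) : ℂ) *
          engelRep (r ^ 3 * δ) (r * β) x (fun η => Wdil r φ (r * η)) ξ := by
        rw [Wdil_inv_apply hr, engelRep_engelDil_apply_mul]
    _ = ((r ^ ((1 : ℝ) / 2) * r ^ (-(1 : ℝ) / 2) : ℝ) : ℂ) *
          engelRep (r ^ 3 * δ) (r * β) x φ ξ := by
        simp only [Wdil_apply_mul hr.ne', engelRep_const_mul, Complex.ofReal_mul, mul_assoc]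
    _ = engelRep (r ^ 3 * δ) (r * β) x φ ξ := by
        rw [rpow_half_mul_rpow_neg_half hr, Complex.ofReal_one, one_mul]

theorem stmt9 (δ β r : ℝ) (hδ : δ ≠ 0) (hr : 0 < r) (x : ℝ × ℝ × ℝ × ℝ)
    (φ : ℝ → ℂ) (ξ : ℝ) :
    Wdil r⁻¹ (engelRep δ β (engelDil r x) (Wdil r φ)) ξ =
      engelRep (r ^ 3 * δ) (r * β) x φ ξ :=
  stmt9_general δ β r hr x φ ξ
end

section
/- Let A be a normed ring, H, P : ℝ → A differentiable, μ : ℝ → ℂ differentiable, with H(t)P(t) = μ(t)P(t), P(t)H(t) = μ(t)P(t), and P(t)² = P(t) for all t. Then P(t)·H'(t)·P(t) = μ'(t)·P(t) for all t. -/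
theorem stmt14 {A : Type*} [NormedRing A] [NormedAlgebra ℂ A]
    (H P : ℝ → A) (μ : ℝ → ℂ)
    (hH : Differentiable ℝ H) (hP : Differentiable ℝ P) (hμ : Differentiable ℝ μ)
    (heig : ∀ t, H t * P t = μ t • P t)
    (heig' : ∀ t, P t * H t = μ t • P t)
    (hidem : ∀ t, P t * P t = P t) :
    ∀ t, P t * deriv H t * P t = deriv μ t • P t := by
  intro t
  have h1 : HasDerivAt (fun s => H s * P s) (deriv H t * P t + H t * deriv P t) t :=
    ((hH t).hasDerivAt).mul ((hP t).hasDerivAt)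
  have h2 : HasDerivAt (fun s => μ s • P s) (μ t • deriv P t + deriv μ t • P t) t :=
    ((hμ t).hasDerivAt).smul ((hP t).hasDerivAt)
  have h1' : HasDerivAt (fun s => μ s • P s) (deriv H t * P t + H t * deriv P t) t := by
    simpa only [heig] using h1
  have key : deriv H t * P t + H t * deriv P t = deriv μ t • P t + μ t • deriv P t := by
    rw [h1'.unique h2, add_comm]
  have h3 := congrArg (fun x => P t * x) key
  simp only [mul_add, ← mul_assoc, heig', hidem, smul_mul_assoc, mul_smul_comm] at h3
  exact add_right_cancel h3
end

section
/- Let A be a normed ring, H, P : ℝ → A twice differentiable, μ : ℝ → ℂ twice differentiable, with H(t)P(t) = μ(t)P(t), P(t)H(t) = μ(t)P(t), and P(t)² = P(t) for all t. Then for all t: 2·P(t)·H'(t)·P'(t)·P(t) = μ''(t)·P(t) − P(t)·H''(t)·P(t). -/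
/-! Differentiate `H P = μ P` twice and sandwich the result between two copies of `P`. Using
`P H = μ P` and `P² = P`, the terms with `P''` cancel, and the cross term `2 μ' P P' P` vanishes
because differentiating `P² = P` gives `P' P + P P' = P'`, which forces `P P' P = 0`. -/

section SecondDerivative

variable {𝕜 𝕜' 𝔸 : Type*} [NontriviallyNormedField 𝕜] [NormedRing 𝕜'] [NormedAlgebra 𝕜 𝕜']
  [NormedRing 𝔸] [NormedAlgebra 𝕜 𝔸]

theorem deriv_deriv_fun_mul {f g : 𝕜 → 𝔸} (hf : ContDiff 𝕜 2 f) (hg : ContDiff 𝕜 2 g) (x : 𝕜) :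
    deriv (deriv fun y => f y * g y) x =
      deriv (deriv f) x * g x + 2 • (deriv f x * deriv g x) + f x * deriv (deriv g) x := by
  have hf₁ := hf.differentiable two_ne_zero
  have hg₁ := hg.differentiable two_ne_zero
  have hf₂ := hf.differentiable_deriv_two
  have hg₂ := hg.differentiable_deriv_two
  have hderiv : deriv (fun y => f y * g y) = fun y => deriv f y * g y + f y * deriv g y :=
    funext fun y => deriv_fun_mul (hf₁ y) (hg₁ y)
  rw [hderiv, (((hf₂ x).hasDerivAt.fun_mul (hg₁ x).hasDerivAt).fun_add
    ((hf₁ x).hasDerivAt.fun_mul (hg₂ x).hasDerivAt)).deriv, two_nsmul]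
  abel

theorem deriv_deriv_fun_smul [Module 𝕜' 𝔸] [IsBoundedSMul 𝕜' 𝔸] [IsScalarTower 𝕜 𝕜' 𝔸]
    {c : 𝕜 → 𝕜'} {f : 𝕜 → 𝔸} (hc : ContDiff 𝕜 2 c) (hf : ContDiff 𝕜 2 f) (x : 𝕜) :
    deriv (deriv fun y => c y • f y) x =
      c x • deriv (deriv f) x + 2 • (deriv c x • deriv f x) + deriv (deriv c) x • f x := by
  have hc₁ := hc.differentiable two_ne_zero
  have hf₁ := hf.differentiable two_ne_zero
  have hc₂ := hc.differentiable_deriv_two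
  have hf₂ := hf.differentiable_deriv_two
  have hderiv : deriv (fun y => c y • f y) = fun y => c y • deriv f y + deriv c y • f y :=
    funext fun y => deriv_fun_smul (hc₁ y) (hf₁ y)
  rw [hderiv, (((hc₁ x).hasDerivAt.fun_smul (hf₂ x).hasDerivAt).fun_add
    ((hc₂ x).hasDerivAt.fun_smul (hf₁ x).hasDerivAt)).deriv, two_nsmul]
  abel

end SecondDerivative

theorem IsIdempotentElem.mul_mul_eq_zero_of_add_eq {R : Type*} [NonUnitalRing R] {p d : R}
    (hp : IsIdempotentElem p) (hd : d * p + p * d = d) : p * d * p = 0 := by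
  have h := congrArg (fun x => p * x * p) hd
  simp only [mul_add, add_mul, mul_assoc, hp.eq, ← mul_assoc p p] at h
  simpa [mul_assoc] using h

theorem mul_deriv_mul_eq_zero_of_isIdempotentElem {𝕜 𝔸 : Type*} [NontriviallyNormedField 𝕜]
    [NormedRing 𝔸] [NormedAlgebra 𝕜 𝔸] {P : 𝕜 → 𝔸} (hP : Differentiable 𝕜 P)
    (hidem : ∀ t, IsIdempotentElem (P t)) (t : 𝕜) : P t * deriv P t * P t = 0 := by
  refine (hidem t).mul_mul_eq_zero_of_add_eq ?_
  rw [← deriv_fun_mul (hP t) (hP t)]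
  simp only [(hidem _).eq]

theorem stmt15 {A : Type*} [NormedRing A] [NormedAlgebra ℂ A]
    (H P : ℝ → A) (μ : ℝ → ℂ)
    (hH : ContDiff ℝ 2 H) (hP : ContDiff ℝ 2 P) (hμ : ContDiff ℝ 2 μ)
    (heig : ∀ t, H t * P t = μ t • P t)
    (heig' : ∀ t, P t * H t = μ t • P t)
    (hidem : ∀ t, P t * P t = P t) :
    ∀ t, 2 * (P t * deriv H t * deriv P t * P t) =
      deriv (deriv μ) t • P t - P t * deriv (deriv H) t * P t := by
  intro t
  have hsecond : deriv (deriv H) t * P t + 2 • (deriv H t * deriv P t) + H t * deriv (deriv P) t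
      = μ t • deriv (deriv P) t + 2 • (deriv μ t • deriv P t) + deriv (deriv μ) t • P t := by
    rw [← deriv_deriv_fun_mul hH hP, ← deriv_deriv_fun_smul hμ hP]
    simp only [heig]
  have hPP'P := mul_deriv_mul_eq_zero_of_isIdempotentElem (hP.differentiable two_ne_zero) hidem t
  have hPHx : ∀ x, P t * (H t * x) = μ t • (P t * x) := fun x => by
    rw [← mul_assoc, heig', smul_mul_assoc]
  have hsandwich := congrArg (fun x => P t * x * P t) hsecond
  simp only [mul_add, add_mul, mul_assoc, smul_mul_assoc, mul_smul_comm, hidem, hPHx]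
    at hsandwich
  simp only [← mul_assoc, hPP'P, smul_zero, add_zero] at hsandwich
  rw [two_mul, ← two_nsmul, eq_sub_iff_add_eq, add_comm]
  exact add_right_cancel (hsandwich.trans (add_comm _ _))
end

section
/- Let A be a normed ring, H, P : ℝ → A differentiable, μ, λ : ℝ → ℂ with μ differentiable, and Q : ℝ → A such that for all t: H(t)P(t) = μ(t)P(t), Q(t)H(t) = λ(t)Q(t), and Q(t)P(t) = 0. Then (λ(t) − μ(t))·Q(t)·P'(t) = −Q(t)·H'(t)·P(t) for all t. -/
/-!
Differentiating the eigenvalue equation `H P = μ P` gives `H' P + H P' = μ' P + μ P'`.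
Multiplying on the left by `Q`, the relations `Q H = λ Q` and `Q P = 0` kill the term `μ' Q P`
and turn `Q H P'` into `λ Q P'`, which leaves `Q H' P + λ Q P' = μ Q P'`.
-/

section Algebra

variable {𝕜 A : Type*} [CommRing 𝕜] [Ring A] [Algebra 𝕜 A]

theorem sub_smul_mul_eq_neg_of_mul_eigen {Q H P H' P' : A} {μ lam μ' : 𝕜}
    (hderiv : H' * P + H * P' = μ' • P + μ • P')
    (hQH : Q * H = lam • Q) (hQP : Q * P = 0) :
    (lam - μ) • (Q * P') = -(Q * H' * P) := by
  have hQ := congrArg (Q * ·) hderiv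
  simp only [mul_add, mul_smul_comm, ← mul_assoc, hQH, hQP, smul_mul_assoc, smul_zero,
    zero_add] at hQ
  rw [sub_smul, ← hQ]
  abel

end Algebra

section Calculus

variable {𝕜 𝕜' A : Type*} [NontriviallyNormedField 𝕜] [NontriviallyNormedField 𝕜']
  [NormedAlgebra 𝕜 𝕜'] [NormedRing A] [NormedAlgebra 𝕜 A] [NormedAlgebra 𝕜' A]
  [IsScalarTower 𝕜 𝕜' A]

theorem deriv_mul_add_mul_deriv_of_eigen {H P : 𝕜 → A} {μ : 𝕜 → 𝕜'} {t : 𝕜}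
    (heig : ∀ s, H s * P s = μ s • P s) (hH : DifferentiableAt 𝕜 H t)
    (hP : DifferentiableAt 𝕜 P t) (hμ : DifferentiableAt 𝕜 μ t) :
    deriv H t * P t + H t * deriv P t = deriv μ t • P t + μ t • deriv P t := by
  rw [← deriv_fun_mul hH hP, funext heig, deriv_fun_smul hμ hP, add_comm]

end Calculus

theorem stmt16 {A : Type*} [NormedRing A] [NormedAlgebra ℂ A]
    (H P Q : ℝ → A) (μ lam : ℝ → ℂ)
    (hH : Differentiable ℝ H) (hP : Differentiable ℝ P) (hμ : Differentiable ℝ μ)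
    (heigP : ∀ t, H t * P t = μ t • P t)
    (heigQ : ∀ t, Q t * H t = lam t • Q t)
    (hQP : ∀ t, Q t * P t = 0) :
    ∀ t, (lam t - μ t) • (Q t * deriv P t) = -(Q t * deriv H t * P t) := fun t =>
  sub_smul_mul_eq_neg_of_mul_eigen
    (deriv_mul_add_mul_deriv_of_eigen heigP (hH t) (hP t) (hμ t)) (heigQ t) (hQP t)
end
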